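/- Let ε > 0 and let n ≥ 1 be an integer. For x ∈ ℝ^n let μ_x denote the n-fold product probability measure on ℝ^n whose i-th factor has density t ↦ (ε/2)·exp(−ε·|t − xᵢ|) with respect to Lebesgue measure. Then for all x, y ∈ ℝ^n and every Borel measurable set S ⊆ ℝ^n, μ_x(S) ≤ exp(ε·‖x − y‖₁)·μ_y(S), where ‖x − y‖₁ = Σ_{i=1}^n |xᵢ − yᵢ|. -/

import Mathlib

/-!
The triangle inequality `|t - b| ≤ |t - a| + |a - b|` bounds the Laplace density centred at `a`
by `exp (ε |a - b|)` times the one centred at `b`, so `μ_a ≤ exp (ε |a - b|) • μ_b` as measures.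
Domination by a scalar multiple is preserved by products, with the scalars multiplying, and the
product of the coordinatewise factors is `exp (ε ‖x - y‖₁)`.
-/

open MeasureTheory

/-- The Laplace distribution on `ℝ` with scale `1/ε` centered at `r`: the measure with
density `x ↦ (ε/2) * exp (−ε * |x − r|)` with respect to Lebesgue measure. -/
noncomputable def laplaceMeasureAt (ε r : ℝ) : Measure ℝ :=
  MeasureTheory.volume.withDensity
    (fun x => ENNReal.ofReal ((ε / 2) * Real.exp (-ε * |x - r|)))

/-- The vector Laplace mechanism: the product measure on `ℝ^n` whose `i`-th factor is
the Laplace distribution with scale `1/ε` centered at `x i`. -/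
noncomputable def laplaceMechanism (ε : ℝ) (n : ℕ) (x : Fin n → ℝ) :
    Measure (Fin n → ℝ) :=
  Measure.pi (fun i => laplaceMeasureAt ε (x i))

open scoped ENNReal

namespace MeasureTheory

theorem withDensity_le_smul_withDensity {α : Type*} [MeasurableSpace α] {μ : Measure α}
    {f g : α → ℝ≥0∞} {c : ℝ≥0∞} (hg : Measurable g) (hfg : ∀ᵐ a ∂μ, f a ≤ c * g a) :
    μ.withDensity f ≤ c • μ.withDensity g := by
  rw [← withDensity_smul c hg]
  exact withDensity_mono hfg

namespace Measure

theorem prod_le_smul_prod {α β : Type*} [MeasurableSpace α] [MeasurableSpace β]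
    {μ₁ ν₁ : Measure α} {μ₂ ν₂ : Measure β} [SFinite ν₂] {c₁ c₂ : ℝ≥0∞}
    (h₁ : μ₁ ≤ c₁ • ν₁) (h₂ : μ₂ ≤ c₂ • ν₂) :
    μ₁.prod μ₂ ≤ (c₁ * c₂) • ν₁.prod ν₂ :=
  calc μ₁.prod μ₂ ≤ (c₁ • ν₁).prod (c₂ • ν₂) := prod_mono h₁ h₂
    _ = (c₁ * c₂) • ν₁.prod ν₂ := by rw [prod_smul_left, prod_smul_right, smul_smul]

theorem pi_le_smul_pi {n : ℕ} {α : Fin n → Type*} [∀ i, MeasurableSpace (α i)]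
    {μ ν : ∀ i, Measure (α i)} [∀ i, SigmaFinite (μ i)] [∀ i, SigmaFinite (ν i)]
    {c : Fin n → ℝ≥0∞} (h : ∀ i, μ i ≤ c i • ν i) :
    Measure.pi μ ≤ (∏ i, c i) • Measure.pi ν := by
  induction n with
  | zero => simp [Subsingleton.elim μ ν]
  | succ n ih =>
    have hμ := (measurePreserving_piFinSuccAbove μ 0).symm
    have hν := (measurePreserving_piFinSuccAbove ν 0).symm
    rw [← hμ.map_eq, ← hν.map_eq, ← Measure.map_smul, Fin.prod_univ_succAbove c 0]
    exact map_mono (prod_le_smul_prod (h 0) (ih fun j => h _)) (MeasurableEquiv.measurable _)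

end Measure

end MeasureTheory

theorem Real.exp_neg_mul_abs_sub_le {ε : ℝ} (hε : 0 ≤ ε) (a b t : ℝ) :
    Real.exp (-ε * |t - a|) ≤ Real.exp (ε * |a - b|) * Real.exp (-ε * |t - b|) := by
  rw [← Real.exp_add, Real.exp_le_exp]
  nlinarith [abs_sub_le t a b]

instance (ε r : ℝ) : SigmaFinite (laplaceMeasureAt ε r) := by
  unfold laplaceMeasureAt
  infer_instance

theorem laplaceMeasureAt_le_smul {ε : ℝ} (hε : 0 ≤ ε) (a b : ℝ) :
    laplaceMeasureAt ε a ≤ ENNReal.ofReal (Real.exp (ε * |a - b|)) • laplaceMeasureAt ε b := by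
  refine withDensity_le_smul_withDensity (by fun_prop) (ae_of_all _ fun t => ?_)
  rw [← ENNReal.ofReal_mul (Real.exp_nonneg _), mul_left_comm]
  gcongr
  exact Real.exp_neg_mul_abs_sub_le hε a b t

theorem laplace_mechanism_vector_DP_general (ε : ℝ) (hε : 0 < ε) (n : ℕ)
    (x y : Fin n → ℝ) (S : Set (Fin n → ℝ)) :
    laplaceMechanism ε n x S ≤
      ENNReal.ofReal (Real.exp (ε * ∑ i, |x i - y i|)) * laplaceMechanism ε n y S := by
  have hprod : ∏ i, ENNReal.ofReal (Real.exp (ε * |x i - y i|)) =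
      ENNReal.ofReal (Real.exp (ε * ∑ i, |x i - y i|)) := by
    rw [Finset.mul_sum, Real.exp_sum, ENNReal.ofReal_prod_of_nonneg fun i _ => (Real.exp_pos _).le]
  rw [← hprod]
  exact Measure.pi_le_smul_pi (fun i => laplaceMeasureAt_le_smul hε.le (x i) (y i)) S

/-- **ℓ₁-sensitivity guarantee of the vector Laplace mechanism**: for `ε > 0`,
all `x, y ∈ ℝⁿ` and every Borel set `S ⊆ ℝⁿ`,
`μ_x(S) ≤ exp(ε ‖x − y‖₁) · μ_y(S)`. -/
theorem laplace_mechanism_vector_DP (ε : ℝ) (hε : 0 < ε) (n : ℕ) (hn : 1 ≤ n)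
    (x y : Fin n → ℝ) (S : Set (Fin n → ℝ)) (hS : MeasurableSet S) :
    laplaceMechanism ε n x S ≤
      ENNReal.ofReal (Real.exp (ε * ∑ i, |x i - y i|)) * laplaceMechanism ε n y S :=
  laplace_mechanism_vector_DP_general ε hε n x y S
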